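/- Let p ≥ 1 be an integer and let N be a p-rooted almost-binary phylogenetic network on X whose maximal zig-zag trail decomposition consists of exactly two M-fences of length 4, exactly one W-fence of length 6, and N-fences of length 1. Then N has exactly 12 minimal support networks, and every minimal support network of N has exactly one reticulation. -/

import Mathlib

open Finset

variable {V : Type} [DecidableEq V] [Fintype V]

/-- The vertex set of the digraph given by the edge set `E`. -/
def verts (E : Finset (V × V)) : Finset V :=
  E.image Prod.fst ∪ E.image Prod.snd

/-- In-degree of `v` in the digraph with edge set `E`. -/
def indeg (E : Finset (V × V)) (v : V) : ℕ :=
  (E.filter fun e => e.2 = v).card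

/-- Out-degree of `v` in the digraph with edge set `E`. -/
def outdeg (E : Finset (V × V)) (v : V) : ℕ :=
  (E.filter fun e => e.1 = v).card

/-- `E` is (the edge set of) a `p`-rooted almost-binary phylogenetic network on `X`:
a finite simple DAG with exactly `p` in-degree-0 vertices, each of out-degree 1 or 2 (the roots),
whose set of in-degree-1, out-degree-0 vertices is `X` (the leaves), and all of whose other
vertices have in-degree and out-degree in `{1, 2}`. -/
structure IsPhyloNet (E : Finset (V × V)) (p : ℕ) (X : Finset V) : Prop where
  acyclic : ∀ v : V, ¬ Relation.TransGen (fun a b => (a, b) ∈ E) v v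
  roots_card : ((verts E).filter fun v => indeg E v = 0).card = p
  root_outdeg : ∀ v ∈ verts E, indeg E v = 0 → outdeg E v = 1 ∨ outdeg E v = 2
  leaves_eq : (verts E).filter (fun v => indeg E v = 1 ∧ outdeg E v = 0) = X
  internal_deg : ∀ v ∈ verts E, indeg E v ≠ 0 → v ∉ X →
    (indeg E v = 1 ∨ indeg E v = 2) ∧ (outdeg E v = 1 ∨ outdeg E v = 2)

/-- Two directed edges share a tail or share a head. -/
def Shares (e f : V × V) : Prop := e.1 = f.1 ∨ e.2 = f.2

/-- `S` is (the edge set of) a zig-zag trail of the digraph `E`: a subgraph with `m ≥ 1`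
edges which can be ordered so that consecutive edges share a head or share a tail. -/
def IsZigzagTrail (E S : Finset (V × V)) : Prop :=
  S ⊆ E ∧ ∃ l : List (V × V), l ≠ [] ∧ l.Nodup ∧ l.toFinset = S ∧ l.Chain' Shares

/-- A maximal zig-zag trail: one that is not a proper subgraph of another zig-zag trail. -/
def IsMaximalZigzagTrail (E S : Finset (V × V)) : Prop :=
  IsZigzagTrail E S ∧ ∀ S', IsZigzagTrail E S' → ¬ S ⊂ S'

/-- The `i`-th edge (0-indexed) of a zig-zag sequence on vertices `f 0, f 1, ...`;
when `down = true` the first edge descends (`f 0 > f 1`), and directions alternate. -/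
def zigEdge (f : ℕ → V) (down : Bool) (i : ℕ) : V × V :=
  if decide (i % 2 = 0) = down then (f i, f (i + 1)) else (f (i + 1), f i)

/-- `S` consists of the `m` distinct edges of the zig-zag sequence on `f 0, ..., f m`. -/
def IsZigzagShape (S : Finset (V × V)) (m : ℕ) (f : ℕ → V) (down : Bool) : Prop :=
  S = (Finset.range m).image (zigEdge f down) ∧
  ∀ i < m, ∀ j < m, zigEdge f down i = zigEdge f down j → i = j

/-- A crown: an even number `m` of edges written cyclically as `v₀ > v₁ < ⋯ < v_m = v₀`. -/
def IsCrown (S : Finset (V × V)) : Prop :=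
  ∃ m f, 1 ≤ m ∧ m % 2 = 0 ∧ f m = f 0 ∧ IsZigzagShape S m f true

/-- An M-fence: a non-crown with an even number `m` of edges,
of the form `v₀ < v₁ > ⋯ > v_m ≠ v₀`. -/
def IsMFence (S : Finset (V × V)) : Prop :=
  ¬ IsCrown S ∧ ∃ m f, 1 ≤ m ∧ m % 2 = 0 ∧ f m ≠ f 0 ∧ IsZigzagShape S m f false

/-- A W-fence: a non-crown with an even number `m` of edges,
of the form `v₀ > v₁ < ⋯ < v_m ≠ v₀`. -/
def IsWFence (S : Finset (V × V)) : Prop :=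
  ¬ IsCrown S ∧ ∃ m f, 1 ≤ m ∧ m % 2 = 0 ∧ f m ≠ f 0 ∧ IsZigzagShape S m f true

/-- An N-fence: a non-crown with an odd number `m` of edges,
of the form `v₀ > v₁ < ⋯ > v_m`. -/
def IsNFence (S : Finset (V × V)) : Prop :=
  ¬ IsCrown S ∧ ∃ m f, m % 2 = 1 ∧ IsZigzagShape S m f true

/-- A support network of `N = (V, E)`: a spanning subgraph that is itself a
`p`-rooted almost-binary phylogenetic network on `X` (identified with its edge set). -/
def IsSupportNet (E S : Finset (V × V)) (p : ℕ) (X : Finset V) : Prop :=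
  S ⊆ E ∧ verts S = verts E ∧ IsPhyloNet S p X

/-- A minimal support network: no support network is a proper subgraph of it. -/
def IsMinimalSupportNet (E S : Finset (V × V)) (p : ℕ) (X : Finset V) : Prop :=
  IsSupportNet E S p X ∧ ∀ S', IsSupportNet E S' p X → ¬ S' ⊂ S

/-- A minimum support network: one with the fewest edges among all support networks. -/
def IsMinimumSupportNet (E S : Finset (V × V)) (p : ℕ) (X : Finset V) : Prop :=
  IsSupportNet E S p X ∧ ∀ S', IsSupportNet E S' p X → S.card ≤ S'.card

/-- `S ⊆ Z` is A-admissible (degrees taken in the ambient network `E`):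
(C1) `S` contains every edge `(u,v)` of `Z` with `outdeg u = 1` or `indeg v = 1`;
(C2) of any two distinct edges of `Z` sharing a tail or a head, `S` contains at least one. -/
def AAdmissible (E Z S : Finset (V × V)) : Prop :=
  S ⊆ Z ∧
  (∀ e ∈ Z, (outdeg E e.1 = 1 ∨ indeg E e.2 = 1) → e ∈ S) ∧
  (∀ e₁ ∈ Z, ∀ e₂ ∈ Z, e₁ ≠ e₂ → Shares e₁ e₂ → e₁ ∈ S ∨ e₂ ∈ S)

/-- A B-admissible subset: an A-admissible subset none of whose proper subsets
is A-admissible. -/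
def BAdmissible (E Z S : Finset (V × V)) : Prop :=
  AAdmissible E Z S ∧ ∀ S', S' ⊂ S → ¬ AAdmissible E Z S'

/-- A C-admissible subset: an A-admissible subset of minimum cardinality. -/
def CAdmissible (E Z S : Finset (V × V)) : Prop :=
  AAdmissible E Z S ∧ ∀ S', AAdmissible E Z S' → S.card ≤ S'.card

/-- One subdivision step: an edge `(u, v)` is replaced by `(u, w), (w, v)` for a fresh
vertex `w`. -/
def SubdivStep (T T' : Finset (V × V)) : Prop :=
  ∃ u w v, (u, v) ∈ T ∧ w ∉ verts T ∧
    T' = insert (u, w) (insert (w, v) (T.erase (u, v)))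

/-- `S` is a subdivision of `T` (zero or more subdivision steps). -/
def IsSubdivisionOf (S T : Finset (V × V)) : Prop :=
  Relation.ReflTransGen SubdivStep T S

/-- A rooted binary phylogenetic tree on `X`: a 1-rooted network on `X` in which every
non-root, non-leaf vertex has in-degree 1 and out-degree 2. -/
def IsBinaryPhyloTree (T : Finset (V × V)) (X : Finset V) : Prop :=
  IsPhyloNet T 1 X ∧
  ∀ v ∈ verts T, indeg T v ≠ 0 → v ∉ X → indeg T v = 1 ∧ outdeg T v = 2

/-- `N = (V, E)` is tree-based: it has a support tree, i.e. a spanning subgraph that is a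
subdivision of some rooted binary phylogenetic tree on `X`. -/
def IsTreeBased (E : Finset (V × V)) (X : Finset V) : Prop :=
  ∃ S T, S ⊆ E ∧ verts S = verts E ∧ IsBinaryPhyloTree T X ∧ IsSubdivisionOf S T

/-- The underlying undirected simple graph of the digraph with edge set `S`. -/
def usym (S : Finset (V × V)) : SimpleGraph V where
  Adj u v := u ≠ v ∧ ((u, v) ∈ S ∨ (v, u) ∈ S)
  symm := ⟨fun _ _ h => ⟨h.1.symm, h.2.symm⟩⟩
  loopless := ⟨fun _ h => h.1 rfl⟩

/-- Two edges of `S` lie in a common block of the underlying undirected graph: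
they are equal or lie on a common cycle. -/
def SameBlock (S : Finset (V × V)) (e f : V × V) : Prop :=
  e = f ∨ ∃ (a : V) (w : (usym S).Walk a a), w.IsCycle ∧
    s(e.1, e.2) ∈ w.edges ∧ s(f.1, f.2) ∈ w.edges

/-- The number of reticulations (in-degree-2 vertices) contained in the block of the
edge `e` of `S`. -/
noncomputable def blockReticCount (S : Finset (V × V)) (e : V × V) : ℕ :=
  Set.ncard {v : V | indeg S v = 2 ∧ ∃ f ∈ S, SameBlock S e f ∧ (f.1 = v ∨ f.2 = v)}

/-- The level of the network with edge set `S`: the maximum number of reticulations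
contained in a block. -/
noncomputable def level (S : Finset (V × V)) : ℕ :=
  S.sup (blockReticCount S)

/-!
A spanning subgraph `S ⊆ E` is a support network exactly when every tail of `E` keeps an
outgoing edge and every head keeps an incoming one (a head losing all its incoming edges would
be an extra root), so the minimal support networks are the minimal edge sets covering all tails
and heads. A maximal zig-zag trail contains every edge of `E` sharing a tail or a head with one of
its edges, so this covering problem splits into independent problems on the maximal zig-zag
trails: the minimal covers of `E` are the unions of minimal covers of the trails, and their
numbers multiply. An N-fence of length 1 must be kept; an M-fence of length 4 is a copy of the
path `0 < 1 > 2 < 3 > 4` and has 2 minimal covers, and a W-fence of length 6 is a copy of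
`0 > 1 < 2 > ⋯ < 6` and has 3. This gives `2 · 2 · 3 = 12`. With in-degrees at most two, the
number of reticulations of a cover is its excess of edges over heads, which is additive over the
trails: it is 0 for the M-fence covers and 1 for each W-fence cover.
-/

section Covers

variable {α : Type} {A B Z T : Finset (α × α)}

lemma shares_comm {e g : α × α} : Shares e g ↔ Shares g e := by
  unfold Shares; constructor <;> rintro (h | h) <;> simp [h]

def Separated (A B : Finset (α × α)) : Prop :=
  ∀ e ∈ A, ∀ g ∈ B, ¬ Shares e g

lemma Separated.symm (h : Separated A B) : Separated B A :=
  fun g hg e he hs => h e he g hg (shares_comm.1 hs)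

lemma Separated.disjoint (h : Separated A B) : Disjoint A B :=
  disjoint_left.2 fun e heA heB => h e heA e heB (Or.inl rfl)

lemma Separated.mono {A' B' : Finset (α × α)} (h : Separated A B) (hA : A' ⊆ A) (hB : B' ⊆ B) :
    Separated A' B' :=
  fun e he g hg => h e (hA he) g (hB hg)

def Covers (Z T : Finset (α × α)) : Prop :=
  ∀ e ∈ Z, (∃ e' ∈ T, e'.1 = e.1) ∧ (∃ e' ∈ T, e'.2 = e.2)

lemma covers_self (Z : Finset (α × α)) : Covers Z Z :=
  fun e he => ⟨⟨e, he, rfl⟩, ⟨e, he, rfl⟩⟩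

variable [DecidableEq α]

def heads (T : Finset (α × α)) : Finset α := T.image Prod.snd

def tails (T : Finset (α × α)) : Finset α := T.image Prod.fst

instance (Z T : Finset (α × α)) : Decidable (Covers Z T) := by
  unfold Covers; infer_instance

def minCovers (Z : Finset (α × α)) : Finset (Finset (α × α)) :=
  Z.powerset.filter fun T => Covers Z T ∧ ∀ T' ∈ T.powerset, Covers Z T' → T' = T

lemma mem_minCovers :
    T ∈ minCovers Z ↔ T ⊆ Z ∧ Covers Z T ∧ ∀ T' ⊆ T, Covers Z T' → T' = T := by
  simp only [minCovers, mem_filter, mem_powerset]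

lemma Separated.union_left {C : Finset (α × α)} (hA : Separated A C) (hB : Separated B C) :
    Separated (A ∪ B) C := by
  intro e he
  rcases mem_union.1 he with he | he
  exacts [hA e he, hB e he]

lemma covers_inter_iff (h : ∀ e ∈ Z, ∀ e' ∈ T, Shares e e' → e' ∈ Z) :
    Covers Z (T ∩ Z) ↔ Covers Z T := by
  refine forall₂_congr fun e he => and_congr ⟨?_, ?_⟩ ⟨?_, ?_⟩
  · rintro ⟨e', he', h1⟩; exact ⟨e', (mem_inter.1 he').1, h1⟩
  · rintro ⟨e', he', h1⟩; exact ⟨e', mem_inter.2 ⟨he', h e he e' he' (Or.inl h1.symm)⟩, h1⟩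
  · rintro ⟨e', he', h2⟩; exact ⟨e', (mem_inter.1 he').1, h2⟩
  · rintro ⟨e', he', h2⟩; exact ⟨e', mem_inter.2 ⟨he', h e he e' he' (Or.inr h2.symm)⟩, h2⟩

lemma covers_union_iff (hsep : Separated A B) (hT : T ⊆ A ∪ B) :
    Covers (A ∪ B) T ↔ Covers A (T ∩ A) ∧ Covers B (T ∩ B) := by
  have stays (A B : Finset (α × α)) (hsep : Separated A B) (hT : T ⊆ A ∪ B) :
      ∀ e ∈ A, ∀ e' ∈ T, Shares e e' → e' ∈ A := fun e he e' he' hs =>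
    (mem_union.1 (hT he')).resolve_right fun hB => hsep e he e' hB hs
  rw [covers_inter_iff (stays A B hsep hT),
    covers_inter_iff (stays B A hsep.symm (union_comm A B ▸ hT))]
  exact forall_mem_union

lemma union_inter_left_of_subset {TA TB : Finset (α × α)} (hA : TA ⊆ A) (hB : TB ⊆ B)
    (h : Disjoint A B) : (TA ∪ TB) ∩ A = TA := by
  ext x
  simp only [mem_inter, mem_union]
  exact ⟨fun ⟨hx, hxA⟩ => hx.resolve_right fun hxB => disjoint_left.1 h hxA (hB hxB),
    fun hx => ⟨Or.inl hx, hA hx⟩⟩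

lemma inter_union_inter_of_subset (hT : T ⊆ A ∪ B) : T ∩ A ∪ T ∩ B = T := by
  rw [← inter_union_distrib_left, inter_eq_left.2 hT]

lemma union_mem_minCovers {TA TB : Finset (α × α)} (hsep : Separated A B)
    (hA : TA ∈ minCovers A) (hB : TB ∈ minCovers B) : TA ∪ TB ∈ minCovers (A ∪ B) := by
  rw [mem_minCovers] at hA hB ⊢
  have hAB := hsep.disjoint
  have hsub : TA ∪ TB ⊆ A ∪ B := union_subset_union hA.1 hB.1
  refine ⟨hsub, ?_, fun T' hT' hcov => ?_⟩
  · rw [covers_union_iff hsep hsub, union_inter_left_of_subset hA.1 hB.1 hAB,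
      union_comm, union_inter_left_of_subset hB.1 hA.1 hAB.symm]
    exact ⟨hA.2.1, hB.2.1⟩
  · have hT'AB := hT'.trans hsub
    have inA : T' ∩ A ⊆ TA := fun x hx => union_inter_left_of_subset hA.1 hB.1 hAB ▸
      inter_subset_inter_right hT' hx
    have inB : T' ∩ B ⊆ TB := fun x hx => union_inter_left_of_subset hB.1 hA.1 hAB.symm ▸
      union_comm TA TB ▸ inter_subset_inter_right hT' hx
    rw [covers_union_iff hsep hT'AB] at hcov
    rw [← inter_union_inter_of_subset hT'AB, hA.2.2 _ inA hcov.1, hB.2.2 _ inB hcov.2]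

lemma inter_mem_minCovers (hsep : Separated A B) (hT : T ∈ minCovers (A ∪ B)) :
    T ∩ A ∈ minCovers A := by
  rw [mem_minCovers] at hT ⊢
  obtain ⟨hsub, hcov, hmin⟩ := hT
  rw [covers_union_iff hsep hsub] at hcov
  refine ⟨inter_subset_right, hcov.1, fun T' hT' hcovT' => ?_⟩
  have hT'A : T' ⊆ A := hT'.trans inter_subset_right
  have hAB := hsep.disjoint
  have hU : T' ∪ T ∩ B ⊆ A ∪ B := union_subset_union hT'A inter_subset_right
  have hUT : T' ∪ T ∩ B = T := by
    refine hmin _ (union_subset (hT'.trans inter_subset_left) inter_subset_left) ?_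
    rw [covers_union_iff hsep hU, union_inter_left_of_subset hT'A inter_subset_right hAB,
      union_comm, union_inter_left_of_subset inter_subset_right hT'A hAB.symm]
    exact ⟨hcovT', hcov.2⟩
  conv_rhs => rw [← hUT]
  rw [union_inter_left_of_subset hT'A inter_subset_right hAB]

lemma inter_mem_minCovers_right (hsep : Separated A B) (hT : T ∈ minCovers (A ∪ B)) :
    T ∩ B ∈ minCovers B :=
  inter_mem_minCovers hsep.symm (union_comm A B ▸ hT)

lemma card_minCovers_union (hsep : Separated A B) :
    (minCovers (A ∪ B)).card = (minCovers A).card * (minCovers B).card := by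
  have hAB := hsep.disjoint
  rw [← card_product]
  refine card_nbij' (fun T => (T ∩ A, T ∩ B)) (fun P => P.1 ∪ P.2) ?_ ?_ ?_ ?_
  · intro T hT
    exact mem_product.2 ⟨inter_mem_minCovers hsep hT, inter_mem_minCovers_right hsep hT⟩
  · intro P hP
    exact union_mem_minCovers hsep (mem_product.1 hP).1 (mem_product.1 hP).2
  · intro T hT
    exact inter_union_inter_of_subset (mem_minCovers.1 hT).1
  · intro P hP
    have hA := (mem_minCovers.1 (mem_product.1 hP).1).1
    have hB := (mem_minCovers.1 (mem_product.1 hP).2).1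
    dsimp only
    refine Prod.ext (union_inter_left_of_subset hA hB hAB) ?_
    rw [union_comm]
    exact union_inter_left_of_subset hB hA hAB.symm

lemma heads_union : heads (A ∪ B) = heads A ∪ heads B :=
  image_union _ _

lemma heads_mono (h : A ⊆ B) : heads A ⊆ heads B :=
  image_subset_image h

lemma Separated.disjoint_heads (h : Separated A B) : Disjoint (heads A) (heads B) := by
  refine disjoint_left.2 fun x hxA hxB => ?_
  obtain ⟨e, he, rfl⟩ := mem_image.1 hxA
  obtain ⟨g, hg, hge⟩ := mem_image.1 hxB
  exact h e he g hg (Or.inr hge.symm)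

/-- When all in-degrees are at most two, the excess `r` of edges over heads is the number of
reticulations of the cover. -/
structure HasMinCovers (Z : Finset (α × α)) (n r : ℕ) : Prop where
  card_minCovers : (minCovers Z).card = n
  card_eq_card_heads_add : ∀ T ∈ minCovers Z, T.card = (heads T).card + r

lemma HasMinCovers.union {n n' r r' : ℕ} (hsep : Separated A B) (hA : HasMinCovers A n r)
    (hB : HasMinCovers B n' r') : HasMinCovers (A ∪ B) (n * n') (r + r') where
  card_minCovers := by rw [card_minCovers_union hsep, hA.card_minCovers, hB.card_minCovers]
  card_eq_card_heads_add T hT := by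
    have hTA := hA.card_eq_card_heads_add _ (inter_mem_minCovers hsep hT)
    have hTB := hB.card_eq_card_heads_add _ (inter_mem_minCovers_right hsep hT)
    have hsepT := hsep.mono (inter_subset_right (s₁ := T)) (inter_subset_right (s₁ := T))
    rw [← inter_union_inter_of_subset (mem_minCovers.1 hT).1, card_union_of_disjoint hsepT.disjoint,
      heads_union, card_union_of_disjoint hsepT.disjoint_heads]
    omega

lemma HasMinCovers.of_isolated (hZ : ∀ e ∈ Z, ∀ g ∈ Z, Shares e g → g = e) :
    HasMinCovers Z 1 0 := by
  have eq_of_covers : ∀ T ⊆ Z, Covers Z T → T = Z := fun T hT hcov =>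
    (Subset.antisymm hT fun e he => by
      obtain ⟨e', he', h1⟩ := (hcov e he).1
      rwa [← hZ e he e' (hT he') (Or.inl h1.symm)])
  have hmin : minCovers Z = {Z} := by
    ext T
    rw [mem_minCovers, mem_singleton]
    refine ⟨fun hT => eq_of_covers T hT.1 hT.2.1, ?_⟩
    rintro rfl
    exact ⟨Subset.rfl, covers_self T, fun T' hT' hcov => eq_of_covers T' hT' hcov⟩
  refine ⟨by rw [hmin, card_singleton], fun T hT => ?_⟩
  rw [hmin, mem_singleton] at hT
  subst hT
  rw [heads, card_image_of_injOn fun e he g hg h => (hZ e he g hg (Or.inr h)).symm]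
  rfl

end Covers

section Copies

variable {α β : Type} {Z₀ T : Finset (α × α)} {f : α → β}

lemma injOn_prodMap [DecidableEq α] (ht : Set.InjOn f (tails Z₀)) (hh : Set.InjOn f (heads Z₀)) :
    Set.InjOn (Prod.map f f) Z₀ := fun _ he _ he' h =>
  Prod.ext (ht (mem_image_of_mem _ he) (mem_image_of_mem _ he') (congrArg Prod.fst h))
    (hh (mem_image_of_mem _ he) (mem_image_of_mem _ he') (congrArg Prod.snd h))

variable [DecidableEq α] [DecidableEq β]

lemma covers_image_iff (ht : Set.InjOn f (tails Z₀)) (hh : Set.InjOn f (heads Z₀))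
    (hT : T ⊆ Z₀) : Covers (Z₀.image (Prod.map f f)) (T.image (Prod.map f f)) ↔ Covers Z₀ T := by
  unfold Covers
  simp only [forall_mem_image, exists_mem_image, Prod.map_fst, Prod.map_snd]
  refine forall₂_congr fun e he => and_congr (exists_congr fun e' => and_congr_right fun he' => ?_)
    (exists_congr fun e' => and_congr_right fun he' => ?_)
  · exact ht.eq_iff (mem_image_of_mem _ (hT he')) (mem_image_of_mem _ he)
  · exact hh.eq_iff (mem_image_of_mem _ (hT he')) (mem_image_of_mem _ he)

lemma eq_of_image_prodMap_eq (ht : Set.InjOn f (tails Z₀)) (hh : Set.InjOn f (heads Z₀))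
    {T₁ T₂ : Finset (α × α)} (h₁ : T₁ ⊆ Z₀) (h₂ : T₂ ⊆ Z₀)
    (h : T₁.image (Prod.map f f) = T₂.image (Prod.map f f)) : T₁ = T₂ := by
  have := ((injOn_prodMap ht hh).image_eq_image_iff (coe_subset.2 h₁) (coe_subset.2 h₂)).1
    (by rw [← coe_image, ← coe_image, h])
  exact_mod_cast this

lemma image_mem_minCovers_iff (ht : Set.InjOn f (tails Z₀)) (hh : Set.InjOn f (heads Z₀))
    (hT : T ⊆ Z₀) :
    T.image (Prod.map f f) ∈ minCovers (Z₀.image (Prod.map f f)) ↔ T ∈ minCovers Z₀ := by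
  rw [mem_minCovers, mem_minCovers, covers_image_iff ht hh hT]
  refine ⟨fun ⟨_, hcov, hmin⟩ => ⟨hT, hcov, fun T' hT' hcov' => ?_⟩,
    fun ⟨_, hcov, hmin⟩ => ⟨image_subset_image hT, hcov, fun S hS hcovS => ?_⟩⟩
  · exact eq_of_image_prodMap_eq ht hh (hT'.trans hT) hT
      (hmin _ (image_subset_image hT') ((covers_image_iff ht hh (hT'.trans hT)).2 hcov'))
  · obtain ⟨T', hT', rfl⟩ := subset_image_iff.1 hS
    rw [hmin T' hT' ((covers_image_iff ht hh (hT'.trans hT)).1 hcovS)]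

lemma heads_image_prodMap (T : Finset (α × α)) :
    heads (T.image (Prod.map f f)) = (heads T).image f := by
  simp only [heads, image_image]
  rfl

def IsCopy (Z : Finset (β × β)) (Z₀ : Finset (α × α)) : Prop :=
  ∃ f : α → β, Z = Z₀.image (Prod.map f f) ∧ Set.InjOn f (tails Z₀) ∧ Set.InjOn f (heads Z₀)

lemma IsCopy.card_heads {Z : Finset (β × β)} (h : IsCopy Z Z₀) :
    (heads Z).card = (heads Z₀).card := by
  obtain ⟨f, rfl, -, hh⟩ := h
  rw [heads_image_prodMap, card_image_of_injOn hh]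

lemma IsCopy.hasMinCovers {Z : Finset (β × β)} {n r : ℕ} (h : IsCopy Z Z₀)
    (h₀ : HasMinCovers Z₀ n r) : HasMinCovers Z n r := by
  obtain ⟨f, rfl, ht, hh⟩ := h
  have hmin : minCovers (Z₀.image (Prod.map f f)) =
      (minCovers Z₀).image (image (Prod.map f f)) := by
    ext S
    rw [mem_image]
    refine ⟨fun hS => ?_, fun ⟨T, hT, hTS⟩ => ?_⟩
    · obtain ⟨T, hT, rfl⟩ := subset_image_iff.1 (mem_minCovers.1 hS).1
      exact ⟨T, (image_mem_minCovers_iff ht hh hT).1 hS, rfl⟩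
    · rw [← hTS]
      exact (image_mem_minCovers_iff ht hh (mem_minCovers.1 hT).1).2 hT
  refine ⟨?_, fun S hS => ?_⟩
  · rw [hmin, card_image_of_injOn, h₀.card_minCovers]
    exact fun T₁ h₁ T₂ h₂ =>
      eq_of_image_prodMap_eq ht hh (mem_minCovers.1 h₁).1 (mem_minCovers.1 h₂).1
  · rw [hmin, mem_image] at hS
    obtain ⟨T, hT, rfl⟩ := hS
    have hTZ := (mem_minCovers.1 hT).1
    rw [card_image_of_injOn ((injOn_prodMap ht hh).mono (coe_subset.2 hTZ)), heads_image_prodMap,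
      card_image_of_injOn (hh.mono (coe_subset.2 (heads_mono hTZ)))]
    exact h₀.card_eq_card_heads_add T hT

end Copies

section Models

def zigzagModel (m : ℕ) (down : Bool) : Finset (ℕ × ℕ) :=
  (range m).image (zigEdge id down)

lemma heads_zigzagModel_four_false : heads (zigzagModel 4 false) = {0, 2, 4} := by decide

lemma tails_zigzagModel_four_false : tails (zigzagModel 4 false) = {1, 3} := by decide

lemma heads_zigzagModel_four_true : heads (zigzagModel 4 true) = {1, 3} := by decide

lemma heads_zigzagModel_six_true : heads (zigzagModel 6 true) = {1, 3, 5} := by decide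

lemma tails_zigzagModel_six_true : tails (zigzagModel 6 true) = {0, 2, 4, 6} := by decide

-- The minimal covers keep the end edges `0` and `3` and one of the edges `1`, `2`.
lemma hasMinCovers_zigzagModel_four_false : HasMinCovers (zigzagModel 4 false) 2 0 :=
  ⟨by decide, by decide⟩

-- The minimal covers keep the end edges `0` and `5` and the edges `1, 3`, `2, 3` or `2, 4`.
lemma hasMinCovers_zigzagModel_six_true : HasMinCovers (zigzagModel 6 true) 3 1 :=
  ⟨by decide, by decide⟩

end Models

section Trails

variable {α : Type} {f : ℕ → α} {d : Bool} {g : α × α} {i j k : ℕ}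

lemma zigEdge_eq_prodMap (f : ℕ → α) (d : Bool) (i : ℕ) :
    zigEdge f d i = Prod.map f f (zigEdge id d i) := by
  unfold zigEdge; split_ifs <;> rfl

lemma decide_succ_mod_two_eq_zero (i : ℕ) (d : Bool) :
    decide ((i + 1) % 2 = 0) = d ↔ ¬ decide (i % 2 = 0) = d := by
  cases d <;> simp [Nat.succ_mod_two_eq_zero_iff]

/-- The edge `g` meets the zig-zag sequence on `f` at its vertex `f k`, in the role (tail or head)
that `f k` has in the edges of the sequence at `f k`. -/
def MeetsAt (f : ℕ → α) (d : Bool) (k : ℕ) (g : α × α) : Prop :=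
  if decide (k % 2 = 0) = d then g.1 = f k else g.2 = f k

lemma meetsAt_zigEdge (f : ℕ → α) (d : Bool) (k : ℕ) : MeetsAt f d k (zigEdge f d k) := by
  unfold MeetsAt zigEdge
  split_ifs <;> rfl

lemma MeetsAt.shares_zigEdge (h : MeetsAt f d k g) : Shares g (zigEdge f d k) := by
  unfold MeetsAt at h; unfold zigEdge Shares
  split_ifs at h ⊢ <;> simp [h]

lemma MeetsAt.zigEdge_shares (h : MeetsAt f d (j + 1) g) : Shares (zigEdge f d j) g := by
  unfold MeetsAt at h; unfold zigEdge Shares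
  simp only [decide_succ_mod_two_eq_zero] at h
  split_ifs at h ⊢ <;> simp [h]

lemma meetsAt_of_shares_zigEdge (h : Shares (zigEdge f d i) g) :
    MeetsAt f d i g ∨ MeetsAt f d (i + 1) g := by
  unfold MeetsAt; unfold zigEdge Shares at h
  simp only [decide_succ_mod_two_eq_zero]
  split_ifs at h ⊢ <;> grind

lemma isChain_map_range_zigEdge (f : ℕ → α) (d : Bool) (k n : ℕ) :
    ((List.range n).map fun i => zigEdge f d (k + i)).IsChain Shares := by
  refine (List.isChain_map _).2 ((List.isChain_range _ _).2 fun i _ => ?_)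
  exact (meetsAt_zigEdge f d (k + i + 1)).zigEdge_shares

variable {E Z T : Finset (α × α)} {m : ℕ}

def IsSharesClosed (E Z : Finset (α × α)) : Prop :=
  ∀ e ∈ Z, ∀ g ∈ E, Shares e g → g ∈ Z

lemma IsSharesClosed.mem_of_isChain (hZ : IsSharesClosed E Z) {l : List (α × α)}
    (hch : l.IsChain Shares) (hlE : ∀ x ∈ l, x ∈ E) : ∀ x ∈ l, ∀ y ∈ l, x ∈ Z → y ∈ Z := by
  induction hch with
  | nil => simp
  | singleton a => simp
  | @cons_cons a b l hab _ ih =>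
    have hbl : ∀ z ∈ b :: l, z ∈ E := fun z hz => hlE z (List.mem_cons_of_mem a hz)
    have hb : b ∈ b :: l := List.mem_cons_self
    have ha : a ∈ Z ↔ b ∈ Z := ⟨fun h => hZ a h b (hbl b hb) hab,
      fun h => hZ b h a (hlE a List.mem_cons_self) (shares_comm.1 hab)⟩
    have hiff : ∀ z ∈ a :: b :: l, z ∈ Z ↔ b ∈ Z := by
      intro z hz
      rcases List.mem_cons.1 hz with rfl | hz
      · exact ha
      · exact ⟨ih hbl z hz b hb, ih hbl b hb z hz⟩
    exact fun x hx y hy hxZ => (hiff y hy).2 ((hiff x hx).1 hxZ)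

lemma IsSharesClosed.separated {B : Finset (α × α)} (hZ : IsSharesClosed E Z) (hB : B ⊆ E)
    (h : Disjoint Z B) : Separated Z B :=
  fun e he g hg hs => disjoint_left.1 h (hZ e he g (hB hg) hs) hg

variable [DecidableEq α]

lemma IsZigzagShape.zigEdge_mem (h : IsZigzagShape Z m f d) (hi : i < m) : zigEdge f d i ∈ Z :=
  h.1 ▸ mem_image_of_mem _ (mem_range.2 hi)

lemma IsZigzagShape.zigEdge_ne (h : IsZigzagShape Z m f d) (hi : i < m) (hj : j < m)
    (hij : i ≠ j) : zigEdge f d i ≠ zigEdge f d j :=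
  fun he => hij (h.2 i hi j hj he)

lemma IsZigzagShape.card_eq (h : IsZigzagShape Z m f d) : Z.card = m := by
  rw [h.1, card_image_of_injOn fun i hi j hj => h.2 i (mem_range.1 hi) j (mem_range.1 hj),
    card_range]

lemma IsZigzagShape.eq_image (h : IsZigzagShape Z m f d) :
    Z = (zigzagModel m d).image (Prod.map f f) := by
  rw [h.1, zigzagModel, image_image]
  exact image_congr fun i _ => zigEdge_eq_prodMap f d i

lemma IsMaximalZigzagTrail.mem_of_splice (hZ : IsMaximalZigzagTrail E Z) {l₁ l₂ : List (α × α)}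
    (hl : (l₁ ++ l₂).toFinset = Z) (hnd : (l₁ ++ l₂).Nodup)
    (hch : (l₁ ++ g :: l₂).IsChain Shares) (hg : g ∈ E) : g ∈ Z := by
  by_contra hgZ
  refine hZ.2 (insert g Z) ⟨insert_subset hg hZ.1.1, l₁ ++ g :: l₂, by simp, ?_, ?_, hch⟩
    (ssubset_insert hgZ)
  · exact List.perm_middle.nodup_iff.2
      (List.nodup_cons.2 ⟨fun h => hgZ (hl ▸ List.mem_toFinset.2 h), hnd⟩)
  · rw [← hl]
    ext x
    simp only [List.mem_toFinset, List.mem_append, List.mem_cons, mem_insert]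
    tauto

lemma IsMaximalZigzagTrail.mem_of_meetsAt {n : ℕ} (hZ : IsMaximalZigzagTrail E Z)
    (hsh : IsZigzagShape Z (k + n) f d) (hg : g ∈ E) (hk : MeetsAt f d k g) : g ∈ Z := by
  have hsplit : (List.range k).map (fun i => zigEdge f d (0 + i)) ++
      (List.range n).map (fun i => zigEdge f d (k + i)) =
      (List.range (k + n)).map (zigEdge f d) := by
    simp [List.range_add, Function.comp_def]
  -- insert `g` between the two edges of the sequence at `f k`
  refine hZ.mem_of_splice (l₁ := (List.range k).map fun i => zigEdge f d (0 + i))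
    (l₂ := (List.range n).map fun i => zigEdge f d (k + i)) ?_ ?_ ?_ hg
  · rw [hsplit, hsh.1]
    ext x
    simp
  · rw [hsplit]
    exact List.nodup_range.map_on fun i hi j hj hij =>
      hsh.2 i (List.mem_range.1 hi) j (List.mem_range.1 hj) hij
  · refine List.isChain_append.2 ⟨isChain_map_range_zigEdge f d 0 k,
      List.isChain_cons.2 ⟨?_, isChain_map_range_zigEdge f d k n⟩, ?_⟩
    · simp only [List.head?_map, List.head?_range, Option.mem_def]
      split_ifs
      · simp
      · rintro _ ⟨⟩
        simpa using hk.shares_zigEdge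
    · simp only [List.getLast?_map, List.getLast?_range, Option.mem_def, List.head?_cons]
      split_ifs with hk0
      · simp
      · rintro _ ⟨⟩ _ ⟨⟩
        obtain ⟨j, rfl⟩ := Nat.exists_eq_succ_of_ne_zero hk0
        simpa using hk.zigEdge_shares

lemma IsMaximalZigzagTrail.isSharesClosed (hZ : IsMaximalZigzagTrail E Z)
    (hsh : IsZigzagShape Z m f d) : IsSharesClosed E Z := by
  intro e he g hg hs
  obtain ⟨i, hi, rfl⟩ := mem_image.1 (hsh.1 ▸ he)
  have hi := mem_range.1 hi
  rcases meetsAt_of_shares_zigEdge hs with hk | hk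
  · exact hZ.mem_of_meetsAt (n := m - i) (by rwa [Nat.add_sub_cancel' hi.le]) hg hk
  · exact hZ.mem_of_meetsAt (n := m - (i + 1)) (by rwa [Nat.add_sub_cancel' hi]) hg hk

lemma IsMaximalZigzagTrail.eq_of_mem_of_isSharesClosed (hT : IsMaximalZigzagTrail E T)
    (hZ : IsZigzagTrail E Z) (hcl : IsSharesClosed E Z) {e : α × α} (heT : e ∈ T)
    (heZ : e ∈ Z) : T = Z := by
  obtain ⟨⟨hTE, l, -, -, rfl, hch⟩, hmax⟩ := hT
  have hsub : l.toFinset ⊆ Z := fun y hy =>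
    hcl.mem_of_isChain hch (fun x hx => hTE (List.mem_toFinset.2 hx)) _ (List.mem_toFinset.1 heT)
      _ (List.mem_toFinset.1 hy) heZ
  by_contra hne
  exact hmax Z hZ (Finset.ssubset_iff_subset_ne.2 ⟨hsub, hne⟩)

lemma exists_mem_isMaximalZigzagTrail {e : α × α} (he : e ∈ E) :
    ∃ Z, e ∈ Z ∧ IsMaximalZigzagTrail E Z := by
  classical
  let trails := E.powerset.filter fun S => IsZigzagTrail E S ∧ e ∈ S
  have hsingle : IsZigzagTrail E {e} :=
    ⟨singleton_subset_iff.2 he, [e], by simp, by simp, by simp, List.isChain_singleton e⟩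
  obtain ⟨Z, hZ, hmaxcard⟩ := trails.exists_max_image card
    ⟨{e}, mem_filter.2 ⟨mem_powerset.2 hsingle.1, hsingle, mem_singleton_self e⟩⟩
  obtain ⟨-, hZtrail, heZ⟩ := mem_filter.1 hZ
  refine ⟨Z, heZ, hZtrail, fun S hS hZS => ?_⟩
  have := hmaxcard S (mem_filter.2 ⟨mem_powerset.2 hS.1, hS, hZS.1 heZ⟩)
  exact absurd (card_lt_card hZS) (not_lt.2 this)

end Trails

section Networks

variable {α : Type} [DecidableEq α] {E S : Finset (α × α)} {p : ℕ} {X : Finset α} {v : α}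

lemma indeg_mono (h : S ⊆ E) (v : α) : indeg S v ≤ indeg E v :=
  card_le_card (filter_subset_filter _ h)

lemma outdeg_mono (h : S ⊆ E) (v : α) : outdeg S v ≤ outdeg E v :=
  card_le_card (filter_subset_filter _ h)

lemma indeg_pos_iff : 0 < indeg E v ↔ ∃ e ∈ E, e.2 = v := by
  simp [indeg, card_pos, filter_nonempty_iff]

lemma outdeg_pos_iff : 0 < outdeg E v ↔ ∃ e ∈ E, e.1 = v := by
  simp [outdeg, card_pos, filter_nonempty_iff]

lemma mem_verts_iff : v ∈ verts E ↔ 0 < outdeg E v ∨ 0 < indeg E v := by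
  simp [verts, outdeg_pos_iff, indeg_pos_iff]

lemma heads_subset_verts : heads E ⊆ verts E :=
  subset_union_right

lemma Covers.indeg_pos (h : Covers E S) (hv : 0 < indeg E v) : 0 < indeg S v := by
  obtain ⟨e, he, rfl⟩ := indeg_pos_iff.1 hv
  exact indeg_pos_iff.2 (h e he).2

lemma Covers.outdeg_pos (h : Covers E S) (hv : 0 < outdeg E v) : 0 < outdeg S v := by
  obtain ⟨e, he, rfl⟩ := outdeg_pos_iff.1 hv
  exact outdeg_pos_iff.2 (h e he).1

lemma IsPhyloNet.mem_leaves_iff (hN : IsPhyloNet E p X) :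
    v ∈ X ↔ v ∈ verts E ∧ indeg E v = 1 ∧ outdeg E v = 0 := by
  rw [← hN.leaves_eq, mem_filter]

lemma IsPhyloNet.indeg_le_two (hN : IsPhyloNet E p X) (v : α) : indeg E v ≤ 2 := by
  by_cases hv : v ∈ verts E
  · by_cases h0 : indeg E v = 0
    · omega
    by_cases hX : v ∈ X
    · have := hN.mem_leaves_iff.1 hX; omega
    · have := (hN.internal_deg v hv h0 hX).1; omega
  · have := mt mem_verts_iff.2 hv; omega

lemma IsPhyloNet.outdeg_le_two (hN : IsPhyloNet E p X) (v : α) : outdeg E v ≤ 2 := by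
  by_cases hv : v ∈ verts E
  · by_cases h0 : indeg E v = 0
    · have := hN.root_outdeg v hv h0; omega
    by_cases hX : v ∈ X
    · have := hN.mem_leaves_iff.1 hX; omega
    · have := (hN.internal_deg v hv h0 hX).2; omega
  · have := mt mem_verts_iff.2 hv; omega

lemma IsPhyloNet.indeg_eq_one_of_outdeg_eq_zero (hN : IsPhyloNet E p X) (hv : v ∈ verts E)
    (h : outdeg E v = 0) : indeg E v = 1 := by
  by_cases h0 : indeg E v = 0
  · have := hN.root_outdeg v hv h0; omega
  by_cases hX : v ∈ X
  · exact (hN.mem_leaves_iff.1 hX).2.1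
  · have := (hN.internal_deg v hv h0 hX).2; omega

lemma IsSupportNet.covers (hN : IsPhyloNet E p X) (hS : IsSupportNet E S p X) : Covers E S := by
  obtain ⟨hSE, hV, hSN⟩ := hS
  -- the roots of `E` stay roots of `S`, and both networks have `p` roots
  have hroots : (verts E).filter (indeg E · = 0) = (verts S).filter (indeg S · = 0) := by
    refine eq_of_subset_of_card_le (fun v hv => ?_) (by rw [hN.roots_card, hSN.roots_card])
    rw [mem_filter] at hv ⊢
    exact ⟨hV ▸ hv.1, by have := indeg_mono hSE v; omega⟩
  intro e he
  have hout : 0 < outdeg E e.1 := outdeg_pos_iff.2 ⟨e, he, rfl⟩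
  have hin : 0 < indeg E e.2 := indeg_pos_iff.2 ⟨e, he, rfl⟩
  constructor
  · have hv : e.1 ∈ verts S := hV ▸ mem_verts_iff.2 (Or.inl hout)
    have hX : e.1 ∉ X := fun hX => by have := (hN.mem_leaves_iff.1 hX).2.2; omega
    refine outdeg_pos_iff.1 ?_
    by_cases h0 : indeg S e.1 = 0
    · have := hSN.root_outdeg _ hv h0; omega
    · have := (hSN.internal_deg _ hv h0 hX).2; omega
  · have hv : e.2 ∈ verts S := hV ▸ mem_verts_iff.2 (Or.inr hin)
    refine indeg_pos_iff.1 (Nat.pos_of_ne_zero fun h0 => ?_)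
    have hroot : e.2 ∈ (verts S).filter (indeg S · = 0) := mem_filter.2 ⟨hv, h0⟩
    rw [← hroots, mem_filter] at hroot
    omega

lemma isSupportNet_of_covers (hN : IsPhyloNet E p X) (hSE : S ⊆ E) (hcov : Covers E S) :
    IsSupportNet E S p X := by
  have hin : ∀ v, indeg S v = 0 ↔ indeg E v = 0 := fun v => by
    have := hcov.indeg_pos (v := v); have := indeg_mono hSE v; omega
  have hout : ∀ v, outdeg S v = 0 ↔ outdeg E v = 0 := fun v => by
    have := hcov.outdeg_pos (v := v); have := outdeg_mono hSE v; omega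
  have hV : verts S = verts E := by
    ext v
    simp only [mem_verts_iff, Nat.pos_iff_ne_zero, ne_eq, hin, hout]
  refine ⟨hSE, hV, fun v hv => hN.acyclic v (Relation.TransGen.mono (fun _ _ h => hSE h) _ _ hv),
    ?_, ?_, ?_, ?_⟩
  · rw [hV, ← hN.roots_card]
    exact congrArg card (filter_congr fun v _ => hin v)
  · intro v hv h0
    have := hN.root_outdeg v (hV ▸ hv) ((hin v).1 h0)
    have := outdeg_mono hSE v; have := hout v; omega
  · rw [hV, ← hN.leaves_eq]
    refine filter_congr fun v hv => ?_
    have := hN.indeg_eq_one_of_outdeg_eq_zero hv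
    have := indeg_mono hSE v; have := hin v; have := hout v
    omega
  · intro v hv h0 hX
    have := hN.internal_deg v (hV ▸ hv) (by have := hin v; omega) hX
    have := indeg_mono hSE v; have := outdeg_mono hSE v; have := hout v
    omega

lemma isSupportNet_iff (hN : IsPhyloNet E p X) :
    IsSupportNet E S p X ↔ S ⊆ E ∧ Covers E S :=
  ⟨fun h => ⟨h.1, h.covers hN⟩, fun h => isSupportNet_of_covers hN h.1 h.2⟩

lemma isMinimalSupportNet_iff (hN : IsPhyloNet E p X) :
    IsMinimalSupportNet E S p X ↔ S ∈ minCovers E := by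
  rw [IsMinimalSupportNet, isSupportNet_iff hN, mem_minCovers]
  refine ⟨fun ⟨⟨hSE, hcov⟩, hmin⟩ => ⟨hSE, hcov, fun T hT hcovT => ?_⟩,
    fun ⟨hSE, hcov, hmin⟩ => ⟨⟨hSE, hcov⟩, fun T hT hTS => ?_⟩⟩
  · by_contra hne
    exact hmin T ((isSupportNet_iff hN).2 ⟨hT.trans hSE, hcovT⟩)
      (Finset.ssubset_iff_subset_ne.2 ⟨hT, hne⟩)
  · exact hTS.ne (hmin T hTS.subset ((isSupportNet_iff hN).1 hT).2)

lemma card_filter_indeg_eq_two_add_card_heads (h : ∀ v, indeg S v ≤ 2) :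
    ((verts S).filter fun v => indeg S v = 2).card + (heads S).card = S.card := by
  have hpos : ∀ v ∈ heads S, 0 < indeg S v := fun v hv => by
    obtain ⟨e, he, rfl⟩ := mem_image.1 hv
    exact indeg_pos_iff.2 ⟨e, he, rfl⟩
  have hfilter : (verts S).filter (fun v => indeg S v = 2) =
      (heads S).filter (fun v => indeg S v = 2) := by
    ext v
    simp only [mem_filter]
    refine ⟨fun ⟨_, h2⟩ => ⟨?_, h2⟩, fun ⟨hv, h2⟩ => ⟨heads_subset_verts hv, h2⟩⟩
    obtain ⟨e, he, rfl⟩ := indeg_pos_iff.1 (by omega : 0 < indeg S v)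
    exact mem_image_of_mem _ he
  rw [hfilter, card_filter, card_eq_sum_card_image Prod.snd S, card_eq_sum_ones, ← heads,
    ← sum_add_distrib]
  refine sum_congr rfl fun v hv => ?_
  have := hpos v hv
  have := h v
  change _ = indeg S v
  split_ifs <;> omega

end Networks

section Fences

variable {α : Type} [DecidableEq α] {E Z : Finset (α × α)} {p : ℕ} {X : Finset α}

lemma eq_or_eq_of_card_le_two {β : Type} {s : Finset β} (hs : s.card ≤ 2) {a b c : β}
    (ha : a ∈ s) (hb : b ∈ s) (hc : c ∈ s) : a = b ∨ a = c ∨ b = c := by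
  by_contra! h
  exact (two_lt_card.2 ⟨a, ha, b, hb, c, hc, h⟩).not_ge hs

lemma IsMFence.isCopy (hM : IsMFence Z) (hcard : Z.card = 4) : IsCopy Z (zigzagModel 4 false) := by
  obtain ⟨-, m, f, -, -, h40, hsh⟩ := hM
  obtain rfl : m = 4 := hsh.card_eq.symm.trans hcard
  have ne {i j : ℕ} (h : i < 4 ∧ j < 4 ∧ i ≠ j) : zigEdge f false i ≠ zigEdge f false j :=
    hsh.zigEdge_ne h.1 h.2.1 h.2.2
  have h20 : f 2 ≠ f 0 := fun h => ne (i := 0) (j := 1) (by decide) (by simp [zigEdge, h])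
  have h24 : f 2 ≠ f 4 := fun h => ne (i := 2) (j := 3) (by decide) (by simp [zigEdge, h])
  have h13 : f 1 ≠ f 3 := fun h => ne (i := 1) (j := 2) (by decide) (by simp [zigEdge, h])
  refine ⟨f, hsh.eq_image, ?_, ?_⟩
  · rw [tails_zigzagModel_four_false]
    simp [h13]
  · rw [heads_zigzagModel_four_false]
    simp [Set.injOn_insert, h20, h24, h40]

lemma IsWFence.isCopy (hN : IsPhyloNet E p X) (hZE : Z ⊆ E) (hW : IsWFence Z)
    (hcard : Z.card = 6) : IsCopy Z (zigzagModel 6 true) := by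
  obtain ⟨-, m, f, -, -, h60, hsh⟩ := hW
  obtain rfl : m = 6 := hsh.card_eq.symm.trans hcard
  have ne {i j : ℕ} (h : i < 6 ∧ j < 6 ∧ i ≠ j) : zigEdge f true i ≠ zigEdge f true j :=
    hsh.zigEdge_ne h.1 h.2.1 h.2.2
  have three {i j k : ℕ} (h : i < 6 ∧ j < 6 ∧ k < 6 ∧ i ≠ j ∧ i ≠ k ∧ j ≠ k)
      (hsame : (zigEdge f true j).2 = (zigEdge f true i).2 ∧
        (zigEdge f true k).2 = (zigEdge f true i).2 ∨
        (zigEdge f true j).1 = (zigEdge f true i).1 ∧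
        (zigEdge f true k).1 = (zigEdge f true i).1) : False := by
    have mem {i : ℕ} (hi : i < 6) := hZE (hsh.zigEdge_mem hi)
    obtain ⟨hi, hj, hk, hij, hik, hjk⟩ := h
    rcases hsame with ⟨h₂, h₃⟩ | ⟨h₂, h₃⟩
    · rcases eq_or_eq_of_card_le_two (hN.indeg_le_two _) (mem_filter.2 ⟨mem hi, rfl⟩)
        (mem_filter.2 ⟨mem hj, h₂⟩) (mem_filter.2 ⟨mem hk, h₃⟩) with h | h | h
      exacts [ne ⟨hi, hj, hij⟩ h, ne ⟨hi, hk, hik⟩ h, ne ⟨hj, hk, hjk⟩ h]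
    · rcases eq_or_eq_of_card_le_two (hN.outdeg_le_two _) (mem_filter.2 ⟨mem hi, rfl⟩)
        (mem_filter.2 ⟨mem hj, h₂⟩) (mem_filter.2 ⟨mem hk, h₃⟩) with h | h | h
      exacts [ne ⟨hi, hj, hij⟩ h, ne ⟨hi, hk, hik⟩ h, ne ⟨hj, hk, hjk⟩ h]
  have h31 : f 3 ≠ f 1 := fun h => ne (i := 1) (j := 2) (by decide) (by simp [zigEdge, h])
  have h35 : f 3 ≠ f 5 := fun h => ne (i := 3) (j := 4) (by decide) (by simp [zigEdge, h])
  have h51 : f 5 ≠ f 1 := fun h =>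
    three (i := 0) (j := 1) (k := 4) (by decide) (Or.inl (by simp [zigEdge, h]))
  have h20 : f 2 ≠ f 0 := fun h => ne (i := 0) (j := 1) (by decide) (by simp [zigEdge, h])
  have h42 : f 4 ≠ f 2 := fun h => ne (i := 2) (j := 3) (by decide) (by simp [zigEdge, h])
  have h46 : f 4 ≠ f 6 := fun h => ne (i := 4) (j := 5) (by decide) (by simp [zigEdge, h])
  have h40 : f 4 ≠ f 0 := fun h =>
    three (i := 0) (j := 3) (k := 4) (by decide) (Or.inr (by simp [zigEdge, h]))
  have h62 : f 6 ≠ f 2 := fun h =>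
    three (i := 1) (j := 2) (k := 5) (by decide) (Or.inr (by simp [zigEdge, h]))
  refine ⟨f, hsh.eq_image, ?_, ?_⟩
  · rw [tails_zigzagModel_six_true]
    simp [Set.injOn_insert, h20, h40, h60, h42, h62, h46]
  · rw [heads_zigzagModel_six_true]
    simp [Set.injOn_insert, h31, h51, h35]

lemma IsMFence.not_isWFence (hM : IsMFence Z) (hcard : Z.card = 4) : ¬ IsWFence Z := by
  rintro ⟨-, m, f, -, -, -, hsh⟩
  obtain rfl : m = 4 := hsh.card_eq.symm.trans hcard
  have hM := (hM.isCopy hcard).card_heads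
  rw [hsh.eq_image, heads_image_prodMap, heads_zigzagModel_four_true,
    heads_zigzagModel_four_false] at hM
  have := card_image_le (s := ({1, 3} : Finset ℕ)) (f := f)
  simp only [hM] at this
  simp at this

lemma IsWFence.card_eq_six (hW : IsWFence Z)
    (h : (IsMFence Z ∧ Z.card = 4) ∨ (IsWFence Z ∧ Z.card = 6) ∨ (IsNFence Z ∧ Z.card = 1)) :
    Z.card = 6 := by
  rcases h with ⟨hM, h⟩ | ⟨-, h⟩ | ⟨-, h⟩
  · exact absurd hW (hM.not_isWFence h)
  · exact h
  · obtain ⟨-, m, f, -, hm, -, hsh⟩ := hW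
    rw [hsh.card_eq] at h
    omega

end Fences

section Main

variable {α : Type} [DecidableEq α] {E : Finset (α × α)} {p : ℕ} {X : Finset α}

lemma IsSharesClosed.union {A B : Finset (α × α)} (hA : IsSharesClosed E A)
    (hB : IsSharesClosed E B) : IsSharesClosed E (A ∪ B) := by
  intro e he g hg hs
  rcases mem_union.1 he with he | he
  exacts [mem_union_left _ (hA e he g hg hs), mem_union_right _ (hB e he g hg hs)]

lemma IsMaximalZigzagTrail.isSharesClosed_of_fence {Z : Finset (α × α)}
    (hZ : IsMaximalZigzagTrail E Z) (h : IsMFence Z ∨ IsWFence Z ∨ IsNFence Z) :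
    IsSharesClosed E Z := by
  rcases h with ⟨-, _, _, -, -, -, hsh⟩ | ⟨-, _, _, -, -, -, hsh⟩ | ⟨-, _, _, -, hsh⟩ <;>
    exact hZ.isSharesClosed hsh

lemma IsMaximalZigzagTrail.separated {Z Z' : Finset (α × α)} (hZ : IsMaximalZigzagTrail E Z)
    (hcl : IsSharesClosed E Z) (hZ' : IsMaximalZigzagTrail E Z') (hne : Z ≠ Z') :
    Separated Z Z' :=
  hcl.separated hZ'.1.1 <| disjoint_left.2 fun _ heZ heZ' =>
    hne (hZ'.eq_of_mem_of_isSharesClosed hZ.1 hcl heZ' heZ).symm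

lemma eq_of_shares_of_mem_sdiff_fences {Z₁ Z₂ Z₃ : Finset (α × α)}
    (htypes : ∀ Z, IsMaximalZigzagTrail E Z →
      (IsMFence Z ∧ Z.card = 4) ∨ (IsWFence Z ∧ Z.card = 6) ∨ (IsNFence Z ∧ Z.card = 1))
    (hM : {Z | IsMaximalZigzagTrail E Z ∧ IsMFence Z ∧ Z.card = 4} = {Z₁, Z₂})
    (hW : ∀ Z, IsMaximalZigzagTrail E Z ∧ IsWFence Z → Z = Z₃) {e g : α × α}
    (he : e ∈ E \ (Z₁ ∪ Z₂ ∪ Z₃)) (hg : g ∈ E) (hs : Shares e g) : g = e := by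
  obtain ⟨heE, heZ⟩ := mem_sdiff.1 he
  obtain ⟨T, heT, hT⟩ := exists_mem_isMaximalZigzagTrail heE
  rcases htypes T hT with ⟨hMT, hc⟩ | ⟨hWT, -⟩ | ⟨hNT, hc⟩
  · have hT₁₂ : T ∈ ({Z₁, Z₂} : Set (Finset (α × α))) := hM ▸ ⟨hT, hMT, hc⟩
    rcases hT₁₂ with rfl | rfl <;> simp_all
  · rw [hW T ⟨hT, hWT⟩] at heT
    simp_all
  · obtain ⟨x, rfl⟩ := card_eq_one.1 hc
    rw [mem_singleton] at heT
    subst heT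
    have hcl := hT.isSharesClosed_of_fence (Or.inr (Or.inr hNT))
    exact mem_singleton.1 (hcl _ (mem_singleton_self _) g hg hs)

lemma hasMinCovers_of_fences (hN : IsPhyloNet E p X)
    (htypes : ∀ Z, IsMaximalZigzagTrail E Z →
      (IsMFence Z ∧ Z.card = 4) ∨ (IsWFence Z ∧ Z.card = 6) ∨ (IsNFence Z ∧ Z.card = 1))
    (hM : Set.ncard {Z | IsMaximalZigzagTrail E Z ∧ IsMFence Z ∧ Z.card = 4} = 2)
    (hW : ∃! Z, IsMaximalZigzagTrail E Z ∧ IsWFence Z) : HasMinCovers E 12 1 := by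
  obtain ⟨Z₁, Z₂, h₁₂, hMset⟩ := Set.ncard_eq_two.1 hM
  obtain ⟨hmax₁, hM₁, hcard₁⟩ : Z₁ ∈ {Z | IsMaximalZigzagTrail E Z ∧ IsMFence Z ∧ Z.card = 4} :=
    hMset ▸ Set.mem_insert _ _
  obtain ⟨hmax₂, hM₂, hcard₂⟩ : Z₂ ∈ {Z | IsMaximalZigzagTrail E Z ∧ IsMFence Z ∧ Z.card = 4} :=
    hMset ▸ Set.mem_insert_of_mem _ rfl
  obtain ⟨Z₃, ⟨hmax₃, hW₃⟩, hW₃uniq⟩ := hW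
  have hcard₃ := hW₃.card_eq_six (htypes Z₃ hmax₃)
  have hcl₁ := hmax₁.isSharesClosed_of_fence (Or.inl hM₁)
  have hcl₂ := hmax₂.isSharesClosed_of_fence (Or.inl hM₂)
  have hcl₃ := hmax₃.isSharesClosed_of_fence (Or.inr (Or.inl hW₃))
  have hZ₁₃ : Z₁ ≠ Z₃ := fun h => by subst h; omega
  have hZ₂₃ : Z₂ ≠ Z₃ := fun h => by subst h; omega
  have hE : E = Z₁ ∪ Z₂ ∪ Z₃ ∪ E \ (Z₁ ∪ Z₂ ∪ Z₃) := (union_sdiff_of_subset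
    (union_subset (union_subset hmax₁.1.1 hmax₂.1.1) hmax₃.1.1)).symm
  rw [hE]
  refine ((((hM₁.isCopy hcard₁).hasMinCovers hasMinCovers_zigzagModel_four_false).union
    (hmax₁.separated hcl₁ hmax₂ h₁₂)
    ((hM₂.isCopy hcard₂).hasMinCovers hasMinCovers_zigzagModel_four_false)).union
    ((hmax₁.separated hcl₁ hmax₃ hZ₁₃).union_left (hmax₂.separated hcl₂ hmax₃ hZ₂₃))
    ((hW₃.isCopy hN hmax₃.1.1 hcard₃).hasMinCovers hasMinCovers_zigzagModel_six_true)).union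
    ((hcl₁.union hcl₂).union hcl₃ |>.separated sdiff_subset disjoint_sdiff)
    (HasMinCovers.of_isolated fun e he g hg hs =>
      eq_of_shares_of_mem_sdiff_fences htypes hMset hW₃uniq he (mem_sdiff.1 hg).1 hs)

end Main

theorem stmt19_general (p : ℕ) (X : Finset V)
    (E : Finset (V × V)) (hN : IsPhyloNet E p X)
    (htypes : ∀ Z, IsMaximalZigzagTrail E Z →
      (IsMFence Z ∧ Z.card = 4) ∨ (IsWFence Z ∧ Z.card = 6) ∨ (IsNFence Z ∧ Z.card = 1))
    (hM : Set.ncard {Z | IsMaximalZigzagTrail E Z ∧ IsMFence Z ∧ Z.card = 4} = 2)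
    (hW : ∃! Z, IsMaximalZigzagTrail E Z ∧ IsWFence Z) :
    Set.ncard {S | IsMinimalSupportNet E S p X} = 12 ∧
    ∀ S, IsMinimalSupportNet E S p X →
      ((verts S).filter fun v => indeg S v = 2).card = 1 := by
  have hE := hasMinCovers_of_fences hN htypes hM hW
  have hmin : {S | IsMinimalSupportNet E S p X} = ↑(minCovers E) :=
    Set.ext fun S => isMinimalSupportNet_iff hN
  refine ⟨by rw [hmin, Set.ncard_coe_finset, hE.card_minCovers], fun S hS => ?_⟩
  have hS := (isMinimalSupportNet_iff hN).1 hS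
  have hret := card_filter_indeg_eq_two_add_card_heads fun v =>
    (indeg_mono (mem_minCovers.1 hS).1 v).trans (hN.indeg_le_two v)
  have := hE.card_eq_card_heads_add S hS
  omega

/-- A `p`-rooted almost-binary phylogenetic network whose maximal zig-zag trail
decomposition consists of exactly two M-fences of length 4, exactly one W-fence of
length 6, and N-fences of length 1 has exactly 12 minimal support networks, each with
exactly one reticulation. -/
theorem stmt19 (p : ℕ) (hp : 1 ≤ p) (X : Finset V) (hX : X.Nonempty)
    (E : Finset (V × V)) (hN : IsPhyloNet E p X)
    (htypes : ∀ Z, IsMaximalZigzagTrail E Z →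
      (IsMFence Z ∧ Z.card = 4) ∨ (IsWFence Z ∧ Z.card = 6) ∨ (IsNFence Z ∧ Z.card = 1))
    (hM : Set.ncard {Z | IsMaximalZigzagTrail E Z ∧ IsMFence Z ∧ Z.card = 4} = 2)
    (hW : ∃! Z, IsMaximalZigzagTrail E Z ∧ IsWFence Z) :
    Set.ncard {S | IsMinimalSupportNet E S p X} = 12 ∧
    ∀ S, IsMinimalSupportNet E S p X →
      ((verts S).filter fun v => indeg S v = 2).card = 1 :=
  stmt19_general p X E hN htypes hM hW
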